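/- Let q₀ : ℝ → ℂ be continuous and let z₁,…,z_n ∈ ℂ be distinct with Im z_k > 0. Suppose s₁,…,s_n : ℝ → ℂ² are differentiable and satisfy the Zakharov–Shabat system s_k′(x) = −i conj(z_k) σ₃ s_k(x) + Q(q₀(x)) s_k(x) for all x ∈ ℝ, and suppose the Gramian matrix M(x) of (z₁,…,z_n; s₁(x),…,s_n(x)) is invertible for every x ∈ ℝ. Let r_k(x) be the unique solution of the linear system (L1) at each x, and define q(x) := q₀(x) − (2/D(x)) Σ_{k=1}^n Σ_{j=1}^n D_{j,k}(x) s_{j,1}(x) conj(s_{k,2}(x)). Then each r_k is differentiable and satisfies r_k′(x) = −i z_k σ₃ r_k(x) + Q(q(x)) r_k(x) for all x ∈ ℝ. -/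

import Mathlib

open MeasureTheory Matrix ENNReal Filter

noncomputable section

/-- The Pauli matrix `σ₃ = diag(1, -1)`. -/
def sigma3 : Matrix (Fin 2) (Fin 2) ℂ := !![1, 0; 0, -1]

/-- `Q(w)` : the off-diagonal matrix with `(1,2)`-entry `w` and `(2,1)`-entry `-conj w`. -/
def Qm (w : ℂ) : Matrix (Fin 2) (Fin 2) ℂ := !![0, w; -(starRingEnd ℂ w), 0]

/-- The Hermitian inner product `⟨u,v⟩ = conj u₁ * v₁ + conj u₂ * v₂` on `ℂ²`. -/
def inn (u v : Fin 2 → ℂ) : ℂ := starRingEnd ℂ (u 0) * v 0 + starRingEnd ℂ (u 1) * v 1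

/-- The outer product `u ⊗ conj v`. -/
def outer (u v : Fin 2 → ℂ) : Matrix (Fin 2) (Fin 2) ℂ :=
  Matrix.of fun a b => u a * starRingEnd ℂ (v b)

/-- The Gramian matrix `M_{k,j} = -i ⟨s_j, s_k⟩ / (conj z_k - z_j)`. -/
def gram {n : ℕ} (z : Fin n → ℂ) (s : Fin n → Fin 2 → ℂ) : Matrix (Fin n) (Fin n) ℂ :=
  Matrix.of fun k j => -Complex.I * inn (s j) (s k) / (starRingEnd ℂ (z k) - z j)

/-- The `(j,k)`-cofactor `D_{j,k}` of a square matrix. -/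
def cof {n : ℕ} (A : Matrix (Fin n) (Fin n) ℂ) (j k : Fin n) : ℂ := A.adjugate k j

/-- The linear system (L1): `i s_k = ∑_j (⟨s_j,s_k⟩/(conj z_k - z_j)) r_j`. -/
def L1sys {n : ℕ} (z : Fin n → ℂ) (s r : Fin n → Fin 2 → ℂ) : Prop :=
  ∀ k, Complex.I • s k = ∑ j, (inn (s j) (s k) / (starRingEnd ℂ (z k) - z j)) • r j

/-- The linear system (L2): `i r_k = ∑_j (⟨r_j,r_k⟩/(conj z_j - z_k)) s_j`. -/
def L2sys {n : ℕ} (z : Fin n → ℂ) (s r : Fin n → Fin 2 → ℂ) : Prop :=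
  ∀ k, Complex.I • r k = ∑ j, (inn (r j) (r k) / (starRingEnd ℂ (z j) - z k)) • s j

/-- A classical solution of the cubic NLS equation `i q_t + q_xx + 2 |q|² q = 0`;
functions of `(x, t)` are encoded as `q : ℝ → ℝ → ℂ`, `x` first. -/
def IsClassicalNLS (q : ℝ → ℝ → ℂ) : Prop :=
  (∀ t, ContDiff ℝ 2 fun x => q x t) ∧ (∀ x, ContDiff ℝ 1 fun t => q x t) ∧
    ∀ x t, Complex.I * deriv (fun τ => q x τ) t + deriv (deriv fun y => q y t) x
      + 2 * (‖q x t‖ : ℂ) ^ 2 * q x t = 0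

/-- The `x`-part Lax matrix `U = -i z σ₃ + Q(w)`. -/
def Ux (z w : ℂ) : Matrix (Fin 2) (Fin 2) ℂ := (-(Complex.I * z)) • sigma3 + Qm w

/-- The `t`-part Lax matrix `V = i(|w|² - 2z²) σ₃ + 2 z Q(w) - i Q(w_x) σ₃`. -/
def Vt (z w wx : ℂ) : Matrix (Fin 2) (Fin 2) ℂ :=
  (Complex.I * ((‖w‖ : ℂ) ^ 2 - 2 * z ^ 2)) • sigma3 + (2 * z) • Qm w
    - Complex.I • (Qm wx * sigma3)

/-- The dressed potential `q = q₀ - (2/D) ∑_{k,j} D_{j,k} s_{j,1} conj (s_{k,2})` (pointwise). -/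
def dressQ {n : ℕ} (z : Fin n → ℂ) (q0 : ℂ) (s : Fin n → Fin 2 → ℂ) : ℂ :=
  q0 - 2 / (gram z s).det *
    ∑ k, ∑ j, cof (gram z s) j k * s j 0 * starRingEnd ℂ (s k 1)

/-- `Σ^S` of the 2-soliton, as a function of the phases `φ₁, φ₂, ψ₁, ψ₂`. -/
def SigmaSof (η₁ η₂ ξ₁ ξ₂ φ₁ φ₂ ψ₁ ψ₂ : ℝ) : ℂ :=
  (Complex.exp (-2*(η₂:ℂ)*(φ₂:ℂ) + 2*Complex.I*(ψ₁:ℂ)) +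
      Complex.exp (2*(η₂:ℂ)*(φ₂:ℂ) + 2*Complex.I*(ψ₁:ℂ))) / (2*(η₂:ℂ))
  + (Complex.exp (-2*(η₁:ℂ)*(φ₁:ℂ) + 2*Complex.I*(ψ₂:ℂ)) +
      Complex.exp (2*(η₁:ℂ)*(φ₁:ℂ) + 2*Complex.I*(ψ₂:ℂ))) / (2*(η₁:ℂ))
  - (Complex.exp (-2*(η₂:ℂ)*(φ₂:ℂ) + 2*Complex.I*(ψ₁:ℂ)) +
      Complex.exp (2*(η₁:ℂ)*(φ₁:ℂ) + 2*Complex.I*(ψ₂:ℂ))) /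
        ((η₁:ℂ) + (η₂:ℂ) + Complex.I*((ξ₁:ℂ) - (ξ₂:ℂ)))
  - (Complex.exp (-2*(η₁:ℂ)*(φ₁:ℂ) + 2*Complex.I*(ψ₂:ℂ)) +
      Complex.exp (2*(η₂:ℂ)*(φ₂:ℂ) + 2*Complex.I*(ψ₁:ℂ))) /
        ((η₁:ℂ) + (η₂:ℂ) - Complex.I*((ξ₁:ℂ) - (ξ₂:ℂ)))

/-- `D^S` of the 2-soliton, as a function of the phases `φ₁, φ₂, ψ₁, ψ₂`. -/
def DSof (η₁ η₂ ξ₁ ξ₂ φ₁ φ₂ ψ₁ ψ₂ : ℝ) : ℂ :=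
  (Complex.exp (-2*(η₁:ℂ)*(φ₁:ℂ)) + Complex.exp (2*(η₁:ℂ)*(φ₁:ℂ))) *
      (Complex.exp (-2*(η₂:ℂ)*(φ₂:ℂ)) + Complex.exp (2*(η₂:ℂ)*(φ₂:ℂ))) / (4*(η₁:ℂ)*(η₂:ℂ))
  - (Complex.exp (-(η₁:ℂ)*(φ₁:ℂ) - (η₂:ℂ)*(φ₂:ℂ) + Complex.I*((ψ₁:ℂ) - (ψ₂:ℂ))) +
      Complex.exp ((η₁:ℂ)*(φ₁:ℂ) + (η₂:ℂ)*(φ₂:ℂ) - Complex.I*((ψ₁:ℂ) - (ψ₂:ℂ)))) *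
    (Complex.exp (-(η₁:ℂ)*(φ₁:ℂ) - (η₂:ℂ)*(φ₂:ℂ) - Complex.I*((ψ₁:ℂ) - (ψ₂:ℂ))) +
      Complex.exp ((η₁:ℂ)*(φ₁:ℂ) + (η₂:ℂ)*(φ₂:ℂ) + Complex.I*((ψ₁:ℂ) - (ψ₂:ℂ)))) /
    (((η₁:ℂ) + (η₂:ℂ))^2 + ((ξ₁:ℂ) - (ξ₂:ℂ))^2)

/-- The phase `φ = x + 4 ξ t - x_c`. -/
def phiSol (ξ xc x t : ℝ) : ℝ := x + 4*ξ*t - xc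

/-- The phase `ψ = θ - ξ (x + 2 ξ t - x_c) + 2 η² t`. -/
def psiSol (θ ξ xc η x t : ℝ) : ℝ := θ - ξ*(x + 2*ξ*t - xc) + 2*η^2*t

/-- `D^S(x,t)` for the 2-soliton with parameters `η₁, η₂, ξ₁, ξ₂, x₁, x₂, θ₁, θ₂`. -/
def twoSolitonD (η₁ η₂ ξ₁ ξ₂ x₁ x₂ θ₁ θ₂ x t : ℝ) : ℂ :=
  DSof η₁ η₂ ξ₁ ξ₂ (phiSol ξ₁ x₁ x t) (phiSol ξ₂ x₂ x t)
    (psiSol θ₁ ξ₁ x₁ η₁ x t) (psiSol θ₂ ξ₂ x₂ η₂ x t)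

/-- `Σ^S(x,t)` for the 2-soliton. -/
def twoSolitonSigma (η₁ η₂ ξ₁ ξ₂ x₁ x₂ θ₁ θ₂ x t : ℝ) : ℂ :=
  SigmaSof η₁ η₂ ξ₁ ξ₂ (phiSol ξ₁ x₁ x t) (phiSol ξ₂ x₂ x t)
    (psiSol θ₁ ξ₁ x₁ η₁ x t) (psiSol θ₂ ξ₂ x₂ η₂ x t)

/-- The 2-soliton `q^S = 2 Σ^S / D^S`. -/
def twoSoliton (η₁ η₂ ξ₁ ξ₂ x₁ x₂ θ₁ θ₂ x t : ℝ) : ℂ :=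
  2 * twoSolitonSigma η₁ η₂ ξ₁ ξ₂ x₁ x₂ θ₁ θ₂ x t / twoSolitonD η₁ η₂ ξ₁ ξ₂ x₁ x₂ θ₁ θ₂ x t

/-- The separable (Jost-type) form
`s = e^{-i conj z (x - x_j) - 2 i conj z² t + i θ_j} f - e^{i conj z (x - x_j) + 2 i conj z² t - i θ_j} g`. -/
def jost (zj : ℂ) (xj θj : ℝ) (f g : ℝ → ℝ → Fin 2 → ℂ) (x t : ℝ) : Fin 2 → ℂ :=
  Complex.exp (-(Complex.I) * starRingEnd ℂ zj * ((x:ℂ) - (xj:ℂ))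
      - 2*Complex.I*(starRingEnd ℂ zj)^2*(t:ℂ) + Complex.I*(θj:ℂ)) • f x t
  - Complex.exp (Complex.I * starRingEnd ℂ zj * ((x:ℂ) - (xj:ℂ))
      + 2*Complex.I*(starRingEnd ℂ zj)^2*(t:ℂ) - Complex.I*(θj:ℂ)) • g x t

/-- The pair of eigenvalues `z_j = ξ_j + i η_j`, `j = 1, 2`. -/
def zvec (ξ₁ η₁ ξ₂ η₂ : ℝ) : Fin 2 → ℂ :=
  ![(ξ₁:ℂ) + (η₁:ℂ)*Complex.I, (ξ₂:ℂ) + (η₂:ℂ)*Complex.I]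

/-- The two vector functions `s₁, s₂` in separable form. -/
def sJ (ξ₁ η₁ ξ₂ η₂ x₁ x₂ θ₁ θ₂ : ℝ) (f g : Fin 2 → ℝ → ℝ → Fin 2 → ℂ) (j : Fin 2)
    (x t : ℝ) : Fin 2 → ℂ :=
  jost (zvec ξ₁ η₁ ξ₂ η₂ j) (![x₁, x₂] j) (![θ₁, θ₂] j) (f j) (g j) x t

/-- The explicit vector solutions used to build the `n`-soliton from `q₀ = 0`. -/
def solS {n : ℕ} (z : Fin n → ℂ) (xs θ : Fin n → ℝ) (j : Fin n) (x t : ℝ) : Fin 2 → ℂ :=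
  ![Complex.exp (-(Complex.I) * starRingEnd ℂ (z j) * ((x:ℂ) - ((xs j : ℝ):ℂ))
      - 2*Complex.I*(starRingEnd ℂ (z j))^2*(t:ℂ) + Complex.I*((θ j : ℝ):ℂ)),
    -Complex.exp (Complex.I * starRingEnd ℂ (z j) * ((x:ℂ) - ((xs j : ℝ):ℂ))
      + 2*Complex.I*(starRingEnd ℂ (z j))^2*(t:ℂ) - Complex.I*((θ j : ℝ):ℂ))]

/-- The `n`-soliton with parameters `{ξ_j, η_j, x_j, θ_j}`. -/
def nSoliton {n : ℕ} (ξ η xs θ : Fin n → ℝ) (x t : ℝ) : ℂ :=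
  dressQ (fun j => (ξ j : ℂ) + (η j : ℂ)*Complex.I) 0
    (fun j => solS (fun j => (ξ j : ℂ) + (η j : ℂ)*Complex.I) xs θ j x t)

/-! With `S`, `R` the `n × 2` matrices whose rows are `s_k`, `r_k` and `M` the Gram matrix,
(L1) reads `S = M R`. Hence `R = M⁻¹ S` is differentiable and `M R' = S' - M' R`. The
Zakharov–Shabat system for the `s_k` gives `M' = -S σ₃ Sᴴ`, and the Gram matrix intertwines the
eigenvalues: `M Z = Z̄ M + i S Sᴴ` with `Z = diag z`. Substituting, `M` applied to the rows
`U(z_j, q) r_j` equals `S' - M' R` exactly when `[Sᴴ R, σ₃] = Q(q₀ - q)ᵀ`. As `Sᴴ R = Rᴴ M R` is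
Hermitian, this holds for `q = q₀ - 2 (Sᴴ R)₂₁`, which is the dressed potential by Cramer's rule. -/

section MatrixCalculus

variable {𝕜 𝔸 : Type*} [NontriviallyNormedField 𝕜] [NormedField 𝔸] [NormedAlgebra 𝕜 𝔸]
  {l m p : Type*} [Fintype m] {x : 𝕜}

theorem differentiableAt_det [DecidableEq m] {A : 𝕜 → Matrix m m 𝔸}
    (hA : ∀ i j, DifferentiableAt 𝕜 (fun t => A t i j) x) :
    DifferentiableAt 𝕜 (fun t => (A t).det) x := by
  simp only [det_apply']
  exact DifferentiableAt.fun_sum fun σ _ =>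
    (DifferentiableAt.fun_finsetProd fun i _ => hA _ _).const_mul _

theorem differentiableAt_inv_apply [DecidableEq m] {A : 𝕜 → Matrix m m 𝔸}
    (hA : ∀ i j, DifferentiableAt 𝕜 (fun t => A t i j) x) (hdet : (A x).det ≠ 0) (i j : m) :
    DifferentiableAt 𝕜 (fun t => (A t)⁻¹ i j) x := by
  simp only [inv_def, Matrix.smul_apply, adjugate_apply, smul_eq_mul, Ring.inverse_eq_inv]
  refine ((differentiableAt_det hA).inv hdet).mul (differentiableAt_det fun k l => ?_)
  rcases eq_or_ne k j with rfl | hkj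
  · simp only [updateRow_self]
    exact differentiableAt_const _
  · simpa only [updateRow_ne hkj] using hA k l

theorem hasDerivAt_mul_apply {A : 𝕜 → Matrix l m 𝔸} {B : 𝕜 → Matrix m p 𝔸}
    {A' : Matrix l m 𝔸} {B' : Matrix m p 𝔸}
    (hA : ∀ i j, HasDerivAt (fun t => A t i j) (A' i j) x)
    (hB : ∀ j k, HasDerivAt (fun t => B t j k) (B' j k) x) (i : l) (k : p) :
    HasDerivAt (fun t => (A t * B t) i k) ((A' * B x + A x * B') i k) x := by
  simp only [mul_apply, Matrix.add_apply, ← Finset.sum_add_distrib]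
  exact HasDerivAt.fun_sum fun j _ => (hA i j).mul (hB j k)

theorem hasDerivAt_of_eq_mul [DecidableEq m] {M : 𝕜 → Matrix m m 𝔸} {S R : 𝕜 → Matrix m p 𝔸}
    {M' : Matrix m m 𝔸} {S' : Matrix m p 𝔸} (hSR : ∀ t, S t = M t * R t)
    (hM : ∀ i j, HasDerivAt (fun t => M t i j) (M' i j) x)
    (hS : ∀ i a, HasDerivAt (fun t => S t i a) (S' i a) x) (hdet : ∀ t, IsUnit (M t).det)
    (i : m) (a : p) :
    HasDerivAt (fun t => R t i a) (((M x)⁻¹ * (S' - M' * R x)) i a) x := by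
  have hR : ∀ t, R t = (M t)⁻¹ * S t := fun t => by
    rw [hSR, nonsing_inv_mul_cancel_left _ _ (hdet t)]
  set R' : Matrix m p 𝔸 := of fun i a => deriv (fun t => R t i a) x
  have hRd : ∀ i a, HasDerivAt (fun t => R t i a) (R' i a) x := by
    intro i a
    refine DifferentiableAt.hasDerivAt ?_
    simp only [hR, mul_apply]
    exact DifferentiableAt.fun_sum fun j _ =>
      (differentiableAt_inv_apply (fun i j => (hM i j).differentiableAt) (hdet x).ne_zero i j).mul
        (hS j a).differentiableAt
  have hS' : S' = M' * R x + M x * R' := ext fun i a =>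
    (hS i a).unique (by simpa only [← hSR] using hasDerivAt_mul_apply hM hRd i a)
  rw [hS', add_sub_cancel_left, nonsing_inv_mul_cancel_left _ _ (hdet x)]
  exact hRd i a

end MatrixCalculus

theorem conj_ne_of_im_pos {a b : ℂ} (ha : 0 < a.im) (hb : 0 < b.im) : starRingEnd ℂ a ≠ b :=
  fun h => by
    have := congrArg Complex.im h
    simp only [Complex.conj_im] at this
    linarith

section GramMatrix

variable {n : ℕ} {z : Fin n → ℂ} {s r : Fin n → Fin 2 → ℂ}

theorem conj_inn (u v : Fin 2 → ℂ) : starRingEnd ℂ (inn u v) = inn v u := by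
  simp only [inn, map_add, map_mul, Complex.conj_conj]
  ring

variable (z s) in
theorem gram_isHermitian : (gram z s).IsHermitian := by
  ext k j
  simp only [conjTranspose_apply, _root_.gram, of_apply, ← starRingEnd_apply, map_div₀, map_mul,
    map_neg, map_sub, Complex.conj_I, Complex.conj_conj, conj_inn]
  rw [← neg_sub, div_neg]
  ring

theorem gram_mul_diagonal (hz : ∀ k j, starRingEnd ℂ (z k) ≠ z j) :
    gram z s * diagonal z = diagonal (fun k => starRingEnd ℂ (z k)) * gram z s
      + Complex.I • (of s * (of s)ᴴ) := by
  ext k j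
  have hkj : starRingEnd ℂ (z k) - z j ≠ 0 := sub_ne_zero.2 (hz k j)
  simp only [mul_diagonal, diagonal_mul, Matrix.add_apply, Matrix.smul_apply]
  simp only [mul_apply, Fin.sum_univ_two, _root_.gram, inn, of_apply, conjTranspose_apply,
    smul_eq_mul, ← starRingEnd_apply]
  field_simp
  ring

theorem L1sys.of_eq_gram_mul (h : L1sys z s r) : of s = gram z s * of r := by
  ext k a
  have hk := congrFun (h k) a
  simp only [Pi.smul_apply, Finset.sum_apply, smul_eq_mul] at hk
  calc s k a = -Complex.I * (Complex.I * s k a) := by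
        rw [← mul_assoc, neg_mul, Complex.I_mul_I, neg_neg, one_mul]
    _ = (gram z s * of r) k a := by
        rw [hk, Finset.mul_sum, mul_apply]
        exact Finset.sum_congr rfl fun j _ => by simp only [_root_.gram, of_apply]; ring

theorem mul_sigma3_sub_sigma3_mul {G : Matrix (Fin 2) (Fin 2) ℂ} (hG : G.IsHermitian) :
    G * sigma3 - sigma3 * G = (Qm (2 * G 1 0))ᵀ := by
  have h01 : G 0 1 = starRingEnd ℂ (G 1 0) := (hG.apply 0 1).symm
  ext a b
  fin_cases a <;> fin_cases b <;>
    simp [sigma3, Qm, mul_apply, vecMul, dotProduct, Fin.sum_univ_two, h01, map_ofNat] <;> ring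

theorem of_Ux_mulVec (c : Fin n → ℂ) (w : ℂ) (v : Fin n → Fin 2 → ℂ) :
    of (fun j => Ux (c j) w *ᵥ v j)
      = -(Complex.I • (diagonal c * of v * sigma3)) + of v * (Qm w)ᵀ := by
  ext j a
  fin_cases a <;>
    simp [Ux, Qm, sigma3, mul_apply, diagonal_apply, vecHead, vecTail, Fin.sum_univ_two] <;> ring

theorem dressQ_eq_of_eq_gram_mul (h : of s = gram z s * of r) (hM : IsUnit (gram z s).det)
    (q₀ : ℂ) : dressQ z q₀ s = q₀ - 2 * ((of s)ᴴ * of r) 1 0 := by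
  have hr : of r = (gram z s)⁻¹ * of s := by rw [h, nonsing_inv_mul_cancel_left _ _ hM]
  simp only [dressQ, cof, hr, mul_apply, conjTranspose_apply, inv_def, Ring.inverse_eq_inv,
    Matrix.smul_apply, smul_eq_mul, of_apply, Finset.mul_sum, div_eq_mul_inv, ← starRingEnd_apply]
  congr 1
  exact Finset.sum_congr rfl fun k _ => Finset.sum_congr rfl fun j _ => by ring

theorem Qm_sub (a b : ℂ) : Qm (a - b) = Qm a - Qm b := by
  ext i j
  fin_cases i <;> fin_cases j <;> simp [Qm, sub_eq_neg_add, add_comm]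

theorem gram_mul_of_Ux_mulVec (hz : ∀ k j, starRingEnd ℂ (z k) ≠ z j)
    (h : of s = gram z s * of r) (q₀ : ℂ) :
    gram z s * of (fun j => Ux (z j) (q₀ - 2 * ((of s)ᴴ * of r) 1 0) *ᵥ r j)
      = of (fun k => Ux (starRingEnd ℂ (z k)) q₀ *ᵥ s k) + of s * sigma3 * (of s)ᴴ * of r := by
  have hG : ((of s)ᴴ * of r).IsHermitian := by
    rw [h, conjTranspose_mul, (gram_isHermitian z s).eq]
    exact isHermitian_conjTranspose_mul_mul _ (gram_isHermitian z s)
  have hQ : (Qm (q₀ - 2 * ((of s)ᴴ * of r) 1 0))ᵀ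
      = (Qm q₀)ᵀ + sigma3 * ((of s)ᴴ * of r) - (of s)ᴴ * of r * sigma3 := by
    rw [Qm_sub, transpose_sub, ← mul_sigma3_sub_sigma3_mul hG]; abel
  rw [of_Ux_mulVec, of_Ux_mulVec, hQ]
  simp only [Matrix.mul_add, Matrix.mul_sub, Matrix.mul_neg, Matrix.mul_smul, ← Matrix.mul_assoc,
    gram_mul_diagonal hz, Matrix.add_mul, Matrix.smul_mul, smul_add, smul_smul, Complex.I_mul_I,
    neg_one_smul]
  simp only [Matrix.mul_assoc, ← h]
  abel

end GramMatrix

section ZakharovShabatFlow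

variable {n : ℕ} {z : Fin n → ℂ}

theorem HasDerivAt.inn {u v : ℝ → Fin 2 → ℂ} {u' v' : Fin 2 → ℂ} {x : ℝ}
    (hu : HasDerivAt u u' x) (hv : HasDerivAt v v' x) :
    HasDerivAt (fun t => inn (u t) (v t)) (inn u' (v x) + inn (u x) v') x := by
  have hu := hasDerivAt_pi.1 hu
  have hv := hasDerivAt_pi.1 hv
  refine (((hu 0).star.mul (hv 0)).add ((hu 1).star.mul (hv 1))).congr_deriv ?_
  simp only [_root_.inn, starRingEnd_apply]
  ring

theorem inn_Ux_mulVec_add_inn_Ux_mulVec (a b w : ℂ) (u v : Fin 2 → ℂ) :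
    inn (Ux (starRingEnd ℂ a) w *ᵥ u) v + inn u (Ux (starRingEnd ℂ b) w *ᵥ v)
      = Complex.I * (a - starRingEnd ℂ b) * inn u (sigma3 *ᵥ v) := by
  simp [_root_.inn, Ux, Qm, sigma3, mulVec, dotProduct, Fin.sum_univ_two]
  ring

theorem hasDerivAt_gram_apply (hz : ∀ k j, starRingEnd ℂ (z k) ≠ z j)
    {s : Fin n → ℝ → Fin 2 → ℂ} {w : ℂ} {x : ℝ}
    (hs : ∀ k, HasDerivAt (s k) (Ux (starRingEnd ℂ (z k)) w *ᵥ s k x) x) (k j : Fin n) :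
    HasDerivAt (fun t => gram z (fun k => s k t) k j)
      ((-(of (fun k => s k x) * sigma3 * (of fun k => s k x)ᴴ)) k j) x := by
  have hkj : starRingEnd ℂ (z k) - z j ≠ 0 := sub_ne_zero.2 (hz k j)
  refine ((((hs j).inn (hs k)).const_mul (-Complex.I)).div_const
    (starRingEnd ℂ (z k) - z j)).congr_deriv ?_
  rw [inn_Ux_mulVec_add_inn_Ux_mulVec]
  simp [_root_.inn, sigma3, mulVec, dotProduct, mul_apply, Fin.sum_univ_two]
  field_simp
  simp only [Complex.I_sq]
  ring

end ZakharovShabatFlow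

theorem stmt_5_general (n : ℕ) (q₀ : ℝ → ℂ)
    (z : Fin n → ℂ) (him : ∀ k, 0 < (z k).im)
    (s : Fin n → ℝ → Fin 2 → ℂ)
    (hs : ∀ k x, HasDerivAt (s k) ((Ux (starRingEnd ℂ (z k)) (q₀ x)).mulVec (s k x)) x)
    (hM : ∀ x, IsUnit (gram z fun k => s k x))
    (r : Fin n → ℝ → Fin 2 → ℂ)
    (hr : ∀ x, L1sys z (fun k => s k x) fun k => r k x)
    (q : ℝ → ℂ) (hq : ∀ x, q x = dressQ z (q₀ x) fun k => s k x) :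
    ∀ k x, HasDerivAt (r k) ((Ux (z k) (q x)).mulVec (r k x)) x := by
  intro k x
  have hz : ∀ k j, starRingEnd ℂ (z k) ≠ z j := fun k j => conj_ne_of_im_pos (him k) (him j)
  have hSR : ∀ t, of (fun k => s k t) = gram z (fun k => s k t) * of fun k => r k t :=
    fun t => (hr t).of_eq_gram_mul
  have hdet : ∀ t, IsUnit (gram z fun k => s k t).det :=
    fun t => (isUnit_iff_isUnit_det _).1 (hM t)
  have hR := hasDerivAt_of_eq_mul hSR (hasDerivAt_gram_apply hz fun k => hs k x)
    (S' := of fun k => Ux (starRingEnd ℂ (z k)) (q₀ x) *ᵥ s k x)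
    (fun k a => hasDerivAt_pi.1 (hs k x) a) hdet
  rw [Matrix.neg_mul, sub_neg_eq_add, ← gram_mul_of_Ux_mulVec hz (hSR x),
    nonsing_inv_mul_cancel_left _ _ (hdet x), ← dressQ_eq_of_eq_gram_mul (hSR x) (hdet x),
    ← hq x] at hR
  exact hasDerivAt_pi.2 fun a => hR k a

/-- If `s_k` solve the ZS system with potential `q₀` and `r_k` solve (L1), then `r_k` solve
the ZS system with the dressed potential `q`. -/
theorem stmt_5 (n : ℕ) (hn : 1 ≤ n) (q₀ : ℝ → ℂ) (hq₀ : Continuous q₀)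
    (z : Fin n → ℂ) (hz : Function.Injective z) (him : ∀ k, 0 < (z k).im)
    (s : Fin n → ℝ → Fin 2 → ℂ)
    (hs : ∀ k x, HasDerivAt (s k) ((Ux (starRingEnd ℂ (z k)) (q₀ x)).mulVec (s k x)) x)
    (hM : ∀ x, IsUnit (gram z fun k => s k x))
    (r : Fin n → ℝ → Fin 2 → ℂ)
    (hr : ∀ x, L1sys z (fun k => s k x) fun k => r k x)
    (q : ℝ → ℂ) (hq : ∀ x, q x = dressQ z (q₀ x) fun k => s k x) :
    ∀ k x, HasDerivAt (r k) ((Ux (z k) (q x)).mulVec (r k x)) x :=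
  stmt_5_general n q₀ z him s hs hM r hr q hq
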